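/- arXiv:2503.05098 — 3 statements merged into one kernel-verified Lean document; each statement's English description precedes it below -/
import Mathlib

section
/- Let A be a nonempty finite set, Δ̂ : A → ℝ, and I_X, I_Y : A → ℝ with I_X(a) > 0 and I_Y(a) > 0 for all a ∈ A. Fix α ∈ (0,1) and define I_XY(a) = α·I_X(a) + (1−α)·I_Y(a). Let a_XY ∈ A be a minimizer over A of Δ̂(a)² / I_XY(a), and let a_IX ∈ A be a maximizer over A of I_X(a); assume Δ̂(a_IX) ≠ 0. Then I_X(a_XY) ≥ ( Δ̂(a_XY)² / Δ̂(a_IX)² )·I_X(a_IX) − ((1−α)/α)·I_Y(a_XY). -/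
/-- Lower bound on the information gain in the first criterion obtained by the
action selected by deterministic IDS with a mixture information gain criterion. -/
theorem stmt_3 {A : Type*} [Fintype A] [Nonempty A]
    (Δhat IX IY : A → ℝ)
    (hIX : ∀ a, 0 < IX a) (hIY : ∀ a, 0 < IY a)
    (α : ℝ) (hα0 : 0 < α) (hα1 : α < 1)
    (IXY : A → ℝ) (hIXY : ∀ a, IXY a = α * IX a + (1 - α) * IY a)
    (aXY aIX : A)
    (hmin : ∀ a, Δhat aXY ^ 2 / IXY aXY ≤ Δhat a ^ 2 / IXY a)
    (hmax : ∀ a, IX a ≤ IX aIX)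
    (hne : Δhat aIX ≠ 0) :
    IX aXY ≥ (Δhat aXY ^ 2 / Δhat aIX ^ 2) * IX aIX - ((1 - α) / α) * IY aXY := by
  have h1 : 0 < IXY aXY := by rw [hIXY]; nlinarith [hIX aXY, hIY aXY]
  have h2 : 0 < IXY aIX := by rw [hIXY]; nlinarith [hIX aIX, hIY aIX]
  have key := hmin aIX
  rw [div_le_div_iff₀ h1 h2] at key
  have hd : 0 < Δhat aIX ^ 2 := by positivity
  rw [ge_iff_le, sub_le_iff_le_add, div_mul_eq_mul_div, div_le_iff₀ hd,
    div_mul_eq_mul_div]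
  rw [hIXY aXY, hIXY aIX] at key
  have hc : (1 - α) * IY aXY / α * α = (1 - α) * IY aXY :=
    div_mul_cancel₀ _ (ne_of_gt hα0)
  rw [← mul_le_mul_iff_of_pos_right hα0]
  have hc2 : (IX aXY + (1 - α) * IY aXY / α) * Δhat aIX ^ 2 * α
      = (α * IX aXY + (1 - α) * IY aXY) * Δhat aIX ^ 2 := by
    field_simp
  rw [hc2]
  nlinarith [mul_nonneg (mul_nonneg (sub_pos.2 hα1).le (sq_nonneg (Δhat aXY))) (hIY aIX).le]
end

section
/- Let U > 0, c > 0, T ≥ 1 an integer, and let x_1, …, x_{T+1} be real numbers with 0 ≤ x_t ≤ U for all t. Then Σ_{t=1}^T x_{t+1} / ( c + Σ_{τ=1}^{t} x_τ ) ≤ log T + U/c + 1, where log denotes the natural logarithm. -/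
open Finset

private lemma stepA (U d y : ℝ) (n : ℕ) (hd : 0 < d) (hU : 0 < U)
    (hy0 : 0 ≤ y) (hyU : y ≤ U) :
    y / d + ∑ k ∈ range n, U / (d + y + k * U) ≤ ∑ k ∈ range (n + 1), U / (d + k * U) := by
  have hpos : ∀ k : ℕ, (0:ℝ) < d + k * U := fun k => by positivity
  have hposy : ∀ k : ℕ, (0:ℝ) < d + y + k * U := fun k => by positivity
  have key : ∀ k : ℕ, U / (d + y + k * U) ≤
      U / (d + (k+1 : ℕ) * U) + ((U - y) / (d + k * U) - (U - y) / (d + (k+1 : ℕ) * U)) := by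
    intro k
    have hA := hpos k
    have hB := hpos (k+1)
    have hC := hposy k
    have hc1 : ((k+1 : ℕ) : ℝ) = (k : ℝ) + 1 := by push_cast; ring
    rw [hc1] at hB ⊢
    have l1 : U / (d + y + k * U) - U / (d + ((k:ℝ)+1) * U)
        = U * (U - y) / ((d + y + k * U) * (d + ((k:ℝ)+1) * U)) := by
      rw [div_sub_div _ _ hC.ne' hB.ne']
      congr 1
      ring
    have l2 : (U - y) / (d + k * U) - (U - y) / (d + ((k:ℝ)+1) * U)
        = U * (U - y) / ((d + k * U) * (d + ((k:ℝ)+1) * U)) := by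
      rw [div_sub_div _ _ hA.ne' hB.ne']
      congr 1
      ring
    have l3 : U * (U - y) / ((d + y + k * U) * (d + ((k:ℝ)+1) * U))
        ≤ U * (U - y) / ((d + k * U) * (d + ((k:ℝ)+1) * U)) := by
      gcongr
      · nlinarith
    linarith [l1, l2, l3]
  have hsum : ∑ k ∈ range n, U / (d + y + k * U)
      ≤ ∑ k ∈ range n, (U / (d + (k+1 : ℕ) * U)
          + ((U - y) / (d + k * U) - (U - y) / (d + (k+1 : ℕ) * U))) :=
    Finset.sum_le_sum fun k _ => key k
  rw [Finset.sum_add_distrib, Finset.sum_range_sub' (fun k => (U - y) / (d + k * U)) n] at hsum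
  have hgn : 0 ≤ (U - y) / (d + (n : ℕ) * U) := div_nonneg (by linarith) (hpos n).le
  have hzero : (U - y) / (d + (0 : ℕ) * U) = (U - y) / d := by norm_num
  rw [hzero] at hsum
  have hfin : ∑ k ∈ range (n+1), U / (d + k * U)
      = ∑ k ∈ range n, U / (d + (k+1 : ℕ) * U) + U / (d + (0:ℕ) * U) :=
    Finset.sum_range_succ' (fun k => U / (d + k * U)) n
  have hz2 : U / (d + (0:ℕ) * U) = U / d := by norm_num
  rw [hz2] at hfin
  have hyd : y / d + (U - y) / d = U / d := by
    rw [← add_div]; ring_nf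
  linarith [hsum, hgn]

private lemma stepB (U : ℝ) (hU : 0 < U) : ∀ (n : ℕ) (d : ℝ) (y : ℕ → ℝ), 0 < d →
    (∀ i, i < n → 0 ≤ y i ∧ y i ≤ U) →
    ∑ i ∈ range n, y i / (d + ∑ j ∈ range i, y j) ≤ ∑ k ∈ range n, U / (d + k * U) := by
  intro n
  induction n with
  | zero => intro d y _ _; simp
  | succ n ih =>
    intro d y hd hy
    have hy0 := hy 0 (Nat.succ_pos n)
    rw [Finset.sum_range_succ' (fun i => y i / (d + ∑ j ∈ range i, y j)) n]
    have hinner : ∀ i : ℕ, d + ∑ j ∈ range (i+1), y j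
        = (d + y 0) + ∑ j ∈ range i, y (j+1) := by
      intro i
      rw [Finset.sum_range_succ' y i]
      ring
    have hstep : ∑ i ∈ range n, y (i+1) / (d + ∑ j ∈ range (i+1), y j)
        = ∑ i ∈ range n, y (i+1) / ((d + y 0) + ∑ j ∈ range i, y (j+1)) := by
      refine Finset.sum_congr rfl fun i _ => ?_
      rw [hinner i]
    have hih := ih (d + y 0) (fun i => y (i+1)) (by linarith [hy0.1])
      (fun i hi => hy (i+1) (by omega))
    have hA := stepA U d (y 0) n hd hU hy0.1 hy0.2
    have hd0 : d + ∑ j ∈ range 0, y j = d := by simp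
    rw [hd0, hstep]
    have : ∀ k ∈ range n, U / (d + y 0 + k * U) = U / ((d + y 0) + k * U) := by
      intro k _; ring_nf
    calc ∑ i ∈ range n, y (i+1) / ((d + y 0) + ∑ j ∈ range i, y (j+1)) + y 0 / d
        ≤ ∑ k ∈ range n, U / ((d + y 0) + k * U) + y 0 / d := by linarith [hih]
      _ = y 0 / d + ∑ k ∈ range n, U / (d + y 0 + k * U) := by
          rw [add_comm]
      _ ≤ ∑ k ∈ range (n + 1), U / (d + k * U) := hA

private lemma harm : ∀ m : ℕ, ∑ k ∈ range m, (1:ℝ) / (k + 1) ≤ 1 + Real.log m := by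
  intro m
  induction m with
  | zero => simp
  | succ m ih =>
    rw [Finset.sum_range_succ]
    rcases Nat.eq_zero_or_pos m with h | h
    · subst h; simp
    · have hm : (0:ℝ) < m := by exact_mod_cast h
      have h1 : Real.log ((m:ℝ) / ((m:ℝ)+1)) ≤ (m:ℝ) / ((m:ℝ)+1) - 1 :=
        Real.log_le_sub_one_of_pos (by positivity)
      rw [Real.log_div hm.ne' (by positivity)] at h1
      have h2 : (m:ℝ) / ((m:ℝ)+1) - 1 = -(1 / ((m:ℝ)+1)) := by
        field_simp
        ring
      rw [h2] at h1
      have hc : ((m+1 : ℕ) : ℝ) = (m : ℝ) + 1 := by push_cast; ring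
      rw [hc]
      linarith [ih, h1]

/-- Analytic bound on a sum of ratios whose numerators are the next elements of
a bounded nonnegative sequence and whose denominators are a constant plus the
running partial sums. -/
theorem stmt_5 (U c : ℝ) (hU : 0 < U) (hc : 0 < c)
    (T : ℕ) (hT : 1 ≤ T) (x : ℕ → ℝ)
    (hx : ∀ t, 1 ≤ t → t ≤ T + 1 → 0 ≤ x t ∧ x t ≤ U) :
    ∑ t ∈ Finset.Icc 1 T, x (t + 1) / (c + ∑ τ ∈ Finset.Icc 1 t, x τ) ≤
      Real.log T + U / c + 1 := by
  have hx1 := hx 1 le_rfl (by omega)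
  have hd : 0 < c + x 1 := by linarith [hx1.1]
  -- convert Icc sums to range sums
  have hIcc : ∀ f : ℕ → ℝ, ∑ t ∈ Finset.Icc 1 T, f t = ∑ i ∈ range T, f (i + 1) := by
    intro f
    rw [← Finset.Ico_add_one_right_eq_Icc, Finset.sum_Ico_eq_sum_range]
    simp [add_comm]
  have hIcc' : ∀ t : ℕ, ∑ τ ∈ Finset.Icc 1 t, x τ = ∑ j ∈ range t, x (j + 1) := by
    intro t
    rw [← Finset.Ico_add_one_right_eq_Icc, Finset.sum_Ico_eq_sum_range]
    simp [add_comm]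
  have hmain : ∑ t ∈ Finset.Icc 1 T, x (t + 1) / (c + ∑ τ ∈ Finset.Icc 1 t, x τ)
      = ∑ i ∈ range T, x (i + 2) / ((c + x 1) + ∑ j ∈ range i, x (j + 2)) := by
    rw [hIcc (fun t => x (t + 1) / (c + ∑ τ ∈ Finset.Icc 1 t, x τ))]
    refine Finset.sum_congr rfl fun i _ => ?_
    rw [hIcc' (i+1), Finset.sum_range_succ' (fun j => x (j + 1)) i]
    norm_num [add_assoc, add_comm, add_left_comm]
  have hB := stepB U hU T (c + x 1) (fun i => x (i + 2)) hd
    (fun i hi => hx (i + 2) (by omega) (by omega))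
  have hmono : ∑ k ∈ range T, U / ((c + x 1) + k * U) ≤ ∑ k ∈ range T, U / (c + k * U) := by
    refine Finset.sum_le_sum fun k _ => ?_
    have h1 : (0:ℝ) < c + k * U := by positivity
    gcongr
    · linarith [hx1.1]
  obtain ⟨m, rfl⟩ : ∃ m, T = m + 1 := ⟨T - 1, by omega⟩
  have hsplit : ∑ k ∈ range (m+1), U / (c + k * U)
      = ∑ k ∈ range m, U / (c + (k+1 : ℕ) * U) + U / (c + (0:ℕ) * U) :=
    Finset.sum_range_succ' (fun k => U / (c + k * U)) m
  have hz : U / (c + (0:ℕ) * U) = U / c := by norm_num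
  have hterm : ∀ k : ℕ, U / (c + (k+1 : ℕ) * U) ≤ 1 / (k + 1 : ℝ) := by
    intro k
    have hkp : (0:ℝ) < ((k:ℝ) + 1) := by positivity
    have hc1 : ((k+1 : ℕ) : ℝ) = (k : ℝ) + 1 := by push_cast; ring
    rw [hc1]
    have h1 : U / (c + ((k:ℝ) + 1) * U) ≤ U / (((k:ℝ) + 1) * U) := by
      rw [div_le_div_iff₀ (by positivity) (by positivity)]
      nlinarith
    have h2 : U / (((k:ℝ) + 1) * U) = 1 / ((k:ℝ) + 1) := by
      rw [eq_div_iff hkp.ne']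
      field_simp
    linarith
  have hharm : ∑ k ∈ range m, U / (c + (k+1 : ℕ) * U) ≤ 1 + Real.log m :=
    le_trans (Finset.sum_le_sum fun k _ => hterm k) (harm m)
  have hlog : Real.log (m : ℝ) ≤ Real.log ((m:ℝ) + 1) := by
    rcases Nat.eq_zero_or_pos m with h | h
    · subst h; norm_num
    · exact Real.log_le_log (by exact_mod_cast h) (by linarith)
  have hcast : ((m + 1 : ℕ) : ℝ) = (m : ℝ) + 1 := by push_cast; ring
  rw [hmain, hcast]
  calc ∑ i ∈ range (m+1), x (i + 2) / ((c + x 1) + ∑ j ∈ range i, x (j + 2))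
      ≤ ∑ k ∈ range (m+1), U / ((c + x 1) + k * U) := hB
    _ ≤ ∑ k ∈ range (m+1), U / (c + k * U) := hmono
    _ = ∑ k ∈ range m, U / (c + (k+1 : ℕ) * U) + U / c := by rw [hsplit, hz]
    _ ≤ (1 + Real.log m) + U / c := by linarith [hharm]
    _ ≤ Real.log ((m:ℝ) + 1) + U / c + 1 := by linarith [hlog]
end

section
/- Given d ∈ ℕ with d ≥ 1, γ > 0, constants U > 0 and ρ_min > 0, vectors φ_1, φ_2, … ∈ ℝ^d with ‖φ_t‖₂ ≤ U, and reals ρ_t ≥ ρ_min, define W_1 = γ·I_d and W_{t+1} = W_t + ρ_t^{-2}·φ_t φ_tᵀ. Then for every integer T ≥ 2, Σ_{t=1}^T (1/2)·log( 1 + ρ_t^{-2}·⟨φ_t, W_t^{-1} φ_t⟩ ) = (1/2)·log( det(W_{T+1}) / det(W_1) ) ≤ (1/2)·d·log T + (1/2)·d·log( 1 + ρ_min^{-2}·U² / γ ). -/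
open Matrix

private lemma vecMulVec_mulVec' {d : ℕ} (u v x : Fin d → ℝ) :
    vecMulVec u v *ᵥ x = (v ⬝ᵥ x) • u := by
  ext i
  simp [vecMulVec, mulVec, dotProduct, Finset.mul_sum, mul_comm, mul_left_comm]

private lemma smul_vecMulVec' {d : ℕ} (c : ℝ) (u v : Fin d → ℝ) :
    c • vecMulVec u v = vecMulVec (c • u) v := by
  ext i j
  simp [vecMulVec, mul_assoc]

private lemma psd_smul_vecMulVec {d : ℕ} (c : ℝ) (hc : 0 ≤ c) (u : Fin d → ℝ) :
    (c • vecMulVec u u).PosSemidef := by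
  refine posSemidef_iff_dotProduct_mulVec.mpr ⟨?_, ?_⟩
  · ext i j
    simp [conjTranspose, vecMulVec, mul_comm]
  · intro x
    rw [smul_mulVec, vecMulVec_mulVec', dotProduct_smul, dotProduct_smul]
    simp only [star_trivial, smul_eq_mul, dotProduct_comm x u]
    exact mul_nonneg hc (mul_self_nonneg _)


/-- The per-step information gains telescope to the log-determinant ratio,
which is bounded by `(1/2) d log T + (1/2) d log(1 + ρ_min⁻²U²/γ)`.
Time is indexed from `0`, so that `W 0 = γ • 1` is the paper's `W_1`, `φ t`
is the paper's `φ_{t+1}`, the sum over `Finset.range T` is the paper's sum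
over `t = 1, …, T`, and `W T` is the paper's `W_{T+1}`. -/
theorem stmt_9 {d : ℕ} (hd : 1 ≤ d) (γ U ρmin : ℝ)
    (hγ : 0 < γ) (hU : 0 < U) (hρmin : 0 < ρmin)
    (φ : ℕ → (Fin d → ℝ)) (ρ : ℕ → ℝ)
    (hφ : ∀ t, Real.sqrt (φ t ⬝ᵥ φ t) ≤ U) (hρ : ∀ t, ρmin ≤ ρ t)
    (W : ℕ → Matrix (Fin d) (Fin d) ℝ)
    (hW0 : W 0 = γ • (1 : Matrix (Fin d) (Fin d) ℝ))
    (hWs : ∀ t, W (t + 1) = W t + ((ρ t) ^ 2)⁻¹ • vecMulVec (φ t) (φ t))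
    (T : ℕ) (hT : 2 ≤ T) :
    (∑ t ∈ Finset.range T,
        (1 / 2 : ℝ) * Real.log (1 + ((ρ t) ^ 2)⁻¹ * (φ t ⬝ᵥ ((W t)⁻¹ *ᵥ φ t))) =
      (1 / 2 : ℝ) * Real.log ((W T).det / (W 0).det)) ∧
    (1 / 2 : ℝ) * Real.log ((W T).det / (W 0).det) ≤
      (1 / 2 : ℝ) * (d : ℝ) * Real.log T +
        (1 / 2 : ℝ) * (d : ℝ) * Real.log (1 + U ^ 2 / ρmin ^ 2 / γ) := by

  have hρt : ∀ t, 0 < ρ t := fun t => lt_of_lt_of_le hρmin (hρ t)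
  have hct : ∀ t, (0:ℝ) < ((ρ t) ^ 2)⁻¹ := fun t => by have := hρt t; positivity
  -- positive definiteness
  have hPD : ∀ t, (W t).PosDef := by
    intro t
    induction t with
    | zero =>
      rw [hW0]
      have : γ • (1 : Matrix (Fin d) (Fin d) ℝ) = diagonal (fun _ => γ) := by
        ext i j; by_cases h : i = j <;> simp [h, Matrix.one_apply, diagonal]
      rw [this]
      exact Matrix.posDef_diagonal_iff.mpr fun _ => hγ
    | succ t ih =>
      rw [hWs t]
      exact ih.add_posSemidef (psd_smul_vecMulVec _ (hct t).le (φ t))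
  have hdetpos : ∀ t, 0 < (W t).det := fun t => (hPD t).det_pos
  -- determinant step
  have hstep : ∀ t, (W (t+1)).det =
      (W t).det * (1 + ((ρ t) ^ 2)⁻¹ * (φ t ⬝ᵥ ((W t)⁻¹ *ᵥ φ t))) := by
    intro t
    have hA : IsUnit (W t).det := (hdetpos t).ne'.isUnit
    rw [hWs t, smul_vecMulVec', vecMulVec_eq Unit,
      Matrix.det_add_replicateCol_mul_replicateRow hA]
    congr 1
    have : (replicateRow Unit (φ t) * (W t)⁻¹ * replicateCol Unit (((ρ t) ^ 2)⁻¹ • φ t)) default default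
        = ((ρ t) ^ 2)⁻¹ * (φ t ⬝ᵥ ((W t)⁻¹ *ᵥ φ t)) := by
      rw [← replicateRow_vecMul, replicateRow_mul_replicateCol_apply, ← dotProduct_mulVec, mulVec_smul,
        dotProduct_smul]
      rfl
    rw [det_unique, Matrix.add_apply, Matrix.one_apply_eq, this]
  -- part 1: telescoping
  have h1 : ∑ t ∈ Finset.range T,
      (1 / 2 : ℝ) * Real.log (1 + ((ρ t) ^ 2)⁻¹ * (φ t ⬝ᵥ ((W t)⁻¹ *ᵥ φ t))) =
      (1 / 2 : ℝ) * Real.log ((W T).det / (W 0).det) := by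
    rw [← Finset.mul_sum]
    congr 1
    have hlog : ∀ t, Real.log (1 + ((ρ t) ^ 2)⁻¹ * (φ t ⬝ᵥ ((W t)⁻¹ *ᵥ φ t)))
        = Real.log ((W (t+1)).det) - Real.log ((W t).det) := by
      intro t
      have hr : (0:ℝ) < 1 + ((ρ t) ^ 2)⁻¹ * (φ t ⬝ᵥ ((W t)⁻¹ *ᵥ φ t)) := by
        have := hdetpos (t+1)
        rw [hstep t] at this
        nlinarith [hdetpos t, mul_pos_iff.mp this]
      rw [eq_sub_iff_add_eq, ← Real.log_mul hr.ne' (hdetpos t).ne', hstep t,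
        mul_comm]
    calc ∑ t ∈ Finset.range T,
          Real.log (1 + ((ρ t) ^ 2)⁻¹ * (φ t ⬝ᵥ ((W t)⁻¹ *ᵥ φ t)))
        = ∑ t ∈ Finset.range T,
          (Real.log ((W (t+1)).det) - Real.log ((W t).det)) := by
          exact Finset.sum_congr rfl fun t _ => hlog t
      _ = Real.log ((W T).det) - Real.log ((W 0).det) :=
          Finset.sum_range_sub (fun t => Real.log ((W t).det)) T
      _ = Real.log ((W T).det / (W 0).det) :=
          (Real.log_div (hdetpos T).ne' (hdetpos 0).ne').symm
  refine ⟨h1, ?_⟩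
  -- part 2: bound
  have hU2 : ∀ t, φ t ⬝ᵥ φ t ≤ U ^ 2 := by
    intro t
    have hnn : (0:ℝ) ≤ φ t ⬝ᵥ φ t :=
      Finset.sum_nonneg fun i _ => mul_self_nonneg _
    calc φ t ⬝ᵥ φ t = Real.sqrt (φ t ⬝ᵥ φ t) ^ 2 := (Real.sq_sqrt hnn).symm
      _ ≤ U ^ 2 := pow_le_pow_left₀ (Real.sqrt_nonneg _) (hφ t) 2
  -- quadratic form expansion
  have hquad : ∀ (n : ℕ) (v : Fin d → ℝ), v ⬝ᵥ (W n *ᵥ v) =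
      γ * (v ⬝ᵥ v) + ∑ t ∈ Finset.range n, ((ρ t) ^ 2)⁻¹ * (φ t ⬝ᵥ v) ^ 2 := by
    intro n v
    induction n with
    | zero => simp [hW0, smul_mulVec, dotProduct_smul]
    | succ n ih =>
      rw [hWs n, add_mulVec, dotProduct_add, ih, Finset.sum_range_succ,
        smul_mulVec, vecMulVec_mulVec', dotProduct_smul, dotProduct_smul,
        smul_eq_mul, smul_eq_mul, dotProduct_comm v (φ n)]
      ring
  -- eigenvalue bound
  set B : ℝ := γ + T * (U ^ 2 / ρmin ^ 2) with hB
  have hherm : (W T).IsHermitian := (hPD T).isHermitian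
  have heig : ∀ i, hherm.eigenvalues i ≤ B := by
    intro i
    have hv : ‖hherm.eigenvectorBasis i‖ = 1 := hherm.eigenvectorBasis.orthonormal.1 i
    set v : Fin d → ℝ := ⇑(hherm.eigenvectorBasis i) with hvdef
    have hvv : v ⬝ᵥ v = 1 := by
      have h := hv
      rw [EuclideanSpace.norm_eq] at h
      simp only [Real.norm_eq_abs, sq_abs] at h
      have h2 := Real.sqrt_eq_one.mp h
      simpa [dotProduct, pow_two, hvdef] using h2
    have := hherm.eigenvalues_eq i
    rw [this]
    simp only [star_trivial, RCLike.re_to_real]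
    rw [hquad T v, hvv, mul_one]
    have hsum : ∑ t ∈ Finset.range T, ((ρ t) ^ 2)⁻¹ * (φ t ⬝ᵥ v) ^ 2
        ≤ T * (U ^ 2 / ρmin ^ 2) := by
      have hterm : ∀ t ∈ Finset.range T,
          ((ρ t) ^ 2)⁻¹ * (φ t ⬝ᵥ v) ^ 2 ≤ U ^ 2 / ρmin ^ 2 := by
        intro t _
        have hCS : (φ t ⬝ᵥ v) ^ 2 ≤ (φ t ⬝ᵥ φ t) * (v ⬝ᵥ v) := by
          simpa [dotProduct, pow_two] using
            Finset.sum_mul_sq_le_sq_mul_sq Finset.univ (φ t) v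
        have h2 : (φ t ⬝ᵥ v) ^ 2 ≤ U ^ 2 := by
          rw [hvv, mul_one] at hCS
          exact hCS.trans (hU2 t)
        have hrr : ((ρ t) ^ 2)⁻¹ ≤ (ρmin ^ 2)⁻¹ := by
          apply inv_anti₀ (by positivity)
          exact pow_le_pow_left₀ hρmin.le (hρ t) 2
        calc ((ρ t) ^ 2)⁻¹ * (φ t ⬝ᵥ v) ^ 2
            ≤ (ρmin ^ 2)⁻¹ * U ^ 2 :=
              mul_le_mul hrr h2 (sq_nonneg _) (by positivity)
          _ = U ^ 2 / ρmin ^ 2 := by ring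
      calc ∑ t ∈ Finset.range T, ((ρ t) ^ 2)⁻¹ * (φ t ⬝ᵥ v) ^ 2
          ≤ ∑ t ∈ Finset.range T, U ^ 2 / ρmin ^ 2 := Finset.sum_le_sum hterm
        _ = T * (U ^ 2 / ρmin ^ 2) := by
            rw [Finset.sum_const, Finset.card_range]; simp [nsmul_eq_mul]
    linarith
  have hBpos : 0 < B := by
    rw [hB]
    positivity
  -- det bound
  have hdetW0 : (W 0).det = γ ^ d := by
    rw [hW0, det_smul, det_one, mul_one, Fintype.card_fin]
  have hdetT : (W T).det ≤ B ^ d := by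
    rw [hherm.det_eq_prod_eigenvalues]
    push_cast
    calc ∏ i, hherm.eigenvalues i ≤ ∏ _i : Fin d, B :=
          Finset.prod_le_prod (fun i _ => ((hPD T).eigenvalues_pos i).le)
            (fun i _ => heig i)
      _ = B ^ d := by simp
  set x : ℝ := 1 + U ^ 2 / ρmin ^ 2 / γ with hx
  have hx1 : (1:ℝ) ≤ x := by
    rw [hx]
    have : (0:ℝ) ≤ U ^ 2 / ρmin ^ 2 / γ := by positivity
    linarith
  have hTx : B / γ ≤ T * x := by
    have hT1 : (1:ℝ) ≤ T := by exact_mod_cast le_trans (by norm_num) hT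
    have hBe : B / γ = 1 + T * (U ^ 2 / ρmin ^ 2 / γ) := by
      rw [hB]
      field_simp
    rw [hBe, hx]
    nlinarith [sq_nonneg U, sq_nonneg ρmin, mul_pos (mul_pos hU hU) hρmin,
      mul_nonneg (sub_nonneg.mpr hT1) (le_of_lt (show (0:ℝ) < U ^ 2 / ρmin ^ 2 / γ + 1 by positivity))]
  have hratio : (W T).det / (W 0).det ≤ (T * x) ^ d := by
    rw [hdetW0, div_le_iff₀ (by positivity)]
    calc (W T).det ≤ B ^ d := hdetT
      _ = (B / γ) ^ d * γ ^ d := by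
          rw [← mul_pow, div_mul_cancel₀ _ hγ.ne']
      _ ≤ (T * x) ^ d * γ ^ d := by
          gcongr
  have hlog1 : Real.log ((W T).det / (W 0).det) ≤ (d : ℝ) * Real.log (T * x) := by
    calc Real.log ((W T).det / (W 0).det) ≤ Real.log ((T * x) ^ d) :=
          Real.log_le_log (div_pos (hdetpos T) (hdetpos 0)) hratio
      _ = (d : ℝ) * Real.log (T * x) := by rw [Real.log_pow]
  have hT0 : (0:ℝ) < T := by positivity
  rw [Real.log_mul hT0.ne' (by rw [hx]; positivity : (0:ℝ) < x).ne'] at hlog1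
  have : (1/2 : ℝ) * Real.log ((W T).det / (W 0).det)
      ≤ (1/2 : ℝ) * ((d : ℝ) * (Real.log T + Real.log x)) := by linarith
  calc (1/2 : ℝ) * Real.log ((W T).det / (W 0).det)
      ≤ (1/2 : ℝ) * ((d : ℝ) * (Real.log T + Real.log x)) := this
    _ = (1/2 : ℝ) * (d : ℝ) * Real.log T + (1/2 : ℝ) * (d : ℝ) * Real.log x := by ring
end
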